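/- Suppose L < 0 and F admits an MMR expansion with data (Δ, (P^{(j)})_{j≥1}). Then for every j ≥ 1: the coefficient of x^r in P^{(j)} vanishes for all r < −2dj, and the coefficient of x^{−2dj} in P^{(j)} equals (−1)^j·C(−L+j−1, j), which is nonzero; hence the minimal x-degree of P^{(j)} is exactly −2dj with leading coefficient (−1)^j·C(−L+j−1, j). -/

import Mathlib

/-- The unit `a + h` of the power series ring `K[[h]]`, for `a ≠ 0`. -/
noncomputable def substUnit (K : Type*) [Field K] (a : K) (ha : a ≠ 0) : (PowerSeries K)ˣ :=
  Units.mkOfMulEqOne (PowerSeries.C a + PowerSeries.X)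
    (PowerSeries.C a + PowerSeries.X)⁻¹
    (PowerSeries.mul_inv_cancel _ (by simp [ha]))

/-- Substitution of the unit `U` (e.g. `1 + h` or `ω + h`) for `q` in a Laurent
polynomial `f ∈ ℤ[q,q⁻¹]`, represented by its finitely supported coefficient function
`f : ℤ →₀ ℤ`; the result `f(U) = ∑_a f_a · U^a` lies in `K[[h]]`. -/
noncomputable def lsubst {K : Type*} [Field K] (U : (PowerSeries K)ˣ) (f : ℤ →₀ ℤ) :
    PowerSeries K :=
  ∑ a ∈ f.support, ((f a : ℤ) : PowerSeries K) * ((U ^ a : (PowerSeries K)ˣ) : PowerSeries K)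

/-- The formal Laurent series `∑_{n ≥ d} c_n xⁿ ∈ K((x))`. -/
noncomputable def seriesOf {K : Type*} [Field K] (d : ℤ) (c : ℤ → K) : LaurentSeries K :=
  HahnSeries.single d 1 * HahnSeries.ofPowerSeries ℤ K (PowerSeries.mk fun i => c (d + i))

/-- A Laurent polynomial over `K`, represented by its finitely supported coefficient
function `g : ℤ →₀ K`, viewed inside the field of formal Laurent series `K((x))`. -/
noncomputable def finsuppToLS {K : Type*} [Zero K] (g : ℤ →₀ K) : LaurentSeries K :=
  { coeff := ⇑g, isPWO_support' := g.finite_support.isPWO }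

/-- A Laurent polynomial with integer coefficients, viewed inside `ℚ((x))`. -/
noncomputable def intLaurentToLS (g : ℤ →₀ ℤ) : LaurentSeries ℚ :=
  finsuppToLS (g.mapRange (fun a : ℤ => (a : ℚ)) (by simp))

/-- `F` (given by its Laurent-polynomial coefficients `f n ∈ ℤ[q,q⁻¹]`, supported in
degrees `n ≥ d`) admits an MMR expansion with data `(Δ, P)`: for every `j ≥ 0`, the
Laurent series `∑_{n ≥ d} ([h^j] f_n(1+h)) xⁿ` equals `P^{(j)}(x)/Δ(x)^{2j+1}` in
`ℚ((x))`, where `P⁰ = 1`. -/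
def HasMMRExpansion (d : ℤ) (f : ℤ → (ℤ →₀ ℤ)) (Δ : ℤ →₀ ℤ) (P : ℕ → (ℤ →₀ ℚ)) : Prop :=
  Δ ≠ 0 ∧ P 0 = Finsupp.single 0 1 ∧
  ∀ j : ℕ,
    seriesOf d (fun r =>
        PowerSeries.coeff j (lsubst (substUnit ℚ 1 one_ne_zero) (f r))) =
      finsuppToLS (P j) / (intLaurentToLS Δ) ^ (2 * j + 1)

/-! Taking `j = 0` in the expansion gives `Δ = A⁻¹` for `A = ∑_{n ≥ d} f_n(1) xⁿ = x^d w₀` with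
`w₀(0) = [x^d] A = 1`. Hence `P⁽ʲ⁾ = x^d w_j · Δ^{2j+1} = x^{-2dj} · w_j w₀^{-(2j+1)}` with `w_j`
a power series, so `P⁽ʲ⁾` has no terms below `x^{-2dj}` and its coefficient there is
`w_j(0) = [h^j] f_d(1+h) = [h^j] (1+h)^L = C(L, j) = (-1)^j C(-L+j-1, j)`, nonzero for `L < 0`. -/

open PowerSeries HahnSeries

namespace HahnSeries

variable {R : Type*}

lemma coeff_single_one_mul_ofPowerSeries_of_lt [Semiring R] {a r : ℤ} (hr : r < a)
    (u : R⟦X⟧) : (single a 1 * ofPowerSeries ℤ R u).coeff r = 0 := by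
  rw [coeff_single_mul, PowerSeries.coeff_coe, if_pos (by omega), mul_zero]

lemma coeff_single_one_mul_ofPowerSeries_self [Semiring R] (a : ℤ) (u : R⟦X⟧) :
    (single a 1 * ofPowerSeries ℤ R u).coeff a = constantCoeff u := by
  rw [coeff_single_mul, one_mul, sub_self, PowerSeries.coeff_coe, if_neg (lt_irrefl 0),
    Int.natAbs_zero, coeff_zero_eq_constantCoeff_apply]

lemma single_one_mul_ofPowerSeries_mul [CommSemiring R] (a b : ℤ) (u v : R⟦X⟧) :
    single a 1 * ofPowerSeries ℤ R u * (single b 1 * ofPowerSeries ℤ R v) =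
      single (a + b) 1 * ofPowerSeries ℤ R (u * v) := by
  rw [mul_mul_mul_comm, single_mul_single, one_mul, map_mul]

lemma single_one_mul_ofPowerSeries_pow [CommSemiring R] (a : ℤ) (u : R⟦X⟧) (n : ℕ) :
    (single a 1 * ofPowerSeries ℤ R u) ^ n = single (n * a) 1 * ofPowerSeries ℤ R (u ^ n) := by
  rw [mul_pow, single_pow, one_pow, nsmul_eq_mul, map_pow]

lemma inv_single_one_mul_ofPowerSeries {K : Type*} [Field K] (a : ℤ) {u : K⟦X⟧}
    (hu : constantCoeff u ≠ 0) :
    (single a (1 : K) * ofPowerSeries ℤ K u)⁻¹ = single (-a) 1 * ofPowerSeries ℤ K u⁻¹ := by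
  refine inv_eq_of_mul_eq_one_right ?_
  rw [single_one_mul_ofPowerSeries_mul, add_neg_cancel, PowerSeries.mul_inv_cancel _ hu,
    single_zero_one, one_mul, map_one]

end HahnSeries

theorem eq_single_one_mul_ofPowerSeries_of_forall_eq_div {K : Type*} [Field K] {d : ℤ}
    {S : ℕ → K⟦X⟧} {P : ℕ → LaurentSeries K} {D : LaurentSeries K}
    (hS₀ : constantCoeff (S 0) ≠ 0) (hP₀ : P 0 = 1)
    (h : ∀ j, single d 1 * ofPowerSeries ℤ K (S j) = P j / D ^ (2 * j + 1)) (j : ℕ) :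
    P j = single (-(2 * d * j)) 1 * ofPowerSeries ℤ K (S j * (S 0)⁻¹ ^ (2 * j + 1)) := by
  have hA : single d (1 : K) * ofPowerSeries ℤ K (S 0) ≠ 0 := fun h0 => hS₀ <| by
    rw [← coeff_single_one_mul_ofPowerSeries_self d, h0, HahnSeries.coeff_zero]
  have hD : D = (single d 1 * ofPowerSeries ℤ K (S 0))⁻¹ := by
    rw [h 0, hP₀, pow_one, one_div, inv_inv]
  rw [← div_mul_cancel₀ (P j) (pow_ne_zero (2 * j + 1) (hD ▸ inv_ne_zero hA)), ← h j, hD,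
    inv_single_one_mul_ofPowerSeries d hS₀, single_one_mul_ofPowerSeries_pow,
    single_one_mul_ofPowerSeries_mul]
  congr 3
  push_cast
  ring

lemma finsuppToLS_coeff {K : Type*} [Zero K] (g : ℤ →₀ K) (a : ℤ) :
    (finsuppToLS g).coeff a = g a := rfl

lemma finsuppToLS_single {K : Type*} [Zero K] (a : ℤ) (r : K) :
    finsuppToLS (Finsupp.single a r) = single a r := by
  ext b
  simp [finsuppToLS, Finsupp.single_apply, HahnSeries.coeff_single, eq_comm]

lemma lsubst_single {K : Type*} [Field K] (U : K⟦X⟧ˣ) (a c : ℤ) :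
    lsubst U (Finsupp.single a c) = (c : K⟦X⟧) * ((U ^ a : K⟦X⟧ˣ) : K⟦X⟧) :=
  Finsupp.sum_single_index (h := fun b (n : ℤ) => (n : K⟦X⟧) * ((U ^ b : K⟦X⟧ˣ) : K⟦X⟧))
    (by simp)

lemma val_substUnit_one_zpow {K : Type*} [Field K] (L : ℤ) :
    ((substUnit K 1 one_ne_zero ^ L : K⟦X⟧ˣ) : K⟦X⟧) = binomialSeries K L := by
  have hpow (n : ℕ) :
      ((substUnit K 1 one_ne_zero ^ n : K⟦X⟧ˣ) : K⟦X⟧) = binomialSeries K (n : ℤ) := by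
    simp [substUnit]
  obtain ⟨n, rfl | rfl⟩ := L.eq_nat_or_neg
  · simpa using hpow n
  · rw [zpow_neg, zpow_natCast]
    apply Units.inv_eq_of_mul_eq_one_right
    rw [hpow, ← binomialSeries_add, add_neg_cancel, binomialSeries_zero]

lemma coeff_substUnit_one_zpow_of_neg {K : Type*} [Field K] {L : ℤ} (hL : L < 0) (j : ℕ) :
    coeff j ((substUnit K 1 one_ne_zero ^ L : K⟦X⟧ˣ) : K⟦X⟧) =
      (-1) ^ j * ((-L + j - 1).toNat.choose j : K) := by
  have hchoose := Ring.choose_neg (-L) j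
  rw [neg_neg, show -L + j - 1 = ((-L + j - 1).toNat : ℤ) by omega, Ring.choose_natCast] at hchoose
  rw [val_substUnit_one_zpow, binomialSeries_coeff, hchoose, Units.smul_def,
    Int.coe_negOnePow_natCast, smul_assoc, zsmul_eq_mul, zsmul_eq_mul, mul_one]
  push_cast
  rfl

theorem mmr_deg_Pj_neg_L_general (d L : ℤ) (hL : L < 0) (f : ℤ → (ℤ →₀ ℤ))
    (hfd : f d = Finsupp.single L 1)
    (Δ : ℤ →₀ ℤ) (P : ℕ → (ℤ →₀ ℚ)) (hmmr : HasMMRExpansion d f Δ P) :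
    ∀ j : ℕ, 1 ≤ j →
      (∀ r : ℤ, r < -(2 * d * j) → P j r = 0) ∧
      P j (-(2 * d * j)) = ((-1) ^ j * ((-L + j - 1).toNat.choose j) : ℚ) ∧
      P j (-(2 * d * j)) ≠ 0 := by
  obtain ⟨-, hP₀, hmmr⟩ := hmmr
  set U := substUnit ℚ 1 one_ne_zero
  set S : ℕ → ℚ⟦X⟧ := fun j => mk fun i => coeff j (lsubst U (f (d + i)))
  have hS (j : ℕ) : constantCoeff (S j) = coeff j ((U ^ L : ℚ⟦X⟧ˣ) : ℚ⟦X⟧) := by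
    simp [S, ← coeff_zero_eq_constantCoeff_apply, hfd, lsubst_single]
  have hS₀ : constantCoeff (S 0) = 1 := by
    rw [hS, coeff_zero_eq_constantCoeff_apply, val_substUnit_one_zpow,
      binomialSeries_constantCoeff]
  -- `seriesOf d _` unfolds to `single d 1 * ofPowerSeries ℤ ℚ (S j)`, so `hmmr` applies as is.
  have hPS := eq_single_one_mul_ofPowerSeries_of_forall_eq_div (S := S)
    (P := fun j => finsuppToLS (P j)) (by simp [hS₀]) (by simp [hP₀, finsuppToLS_single]) hmmr
  intro j _
  have hlead : P j (-(2 * d * j)) = (-1) ^ j * ((-L + j - 1).toNat.choose j : ℚ) := by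
    rw [← finsuppToLS_coeff, hPS, coeff_single_one_mul_ofPowerSeries_self, map_mul, map_pow,
      constantCoeff_inv, hS₀, inv_one, one_pow, mul_one, hS, coeff_substUnit_one_zpow_of_neg hL]
  refine ⟨fun r hr => ?_, hlead, ?_⟩
  · rw [← finsuppToLS_coeff, hPS, coeff_single_one_mul_ofPowerSeries_of_lt hr]
  · rw [hlead]
    have : 0 < (-L + j - 1).toNat.choose j := Nat.choose_pos (by omega)
    positivity

/-- If `L < 0` and `F` admits an MMR expansion with data `(Δ, P)`,
then for every `j ≥ 1` the coefficient of `x^r` in `P⁽ʲ⁾` vanishes for `r < -2dj` and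
the coefficient of `x^{-2dj}` equals `(-1)^j · C(-L+j-1, j)`, which is nonzero; hence
the minimal x-degree of `P⁽ʲ⁾` is exactly `-2dj`. -/
theorem mmr_deg_Pj_neg_L (d L : ℤ) (hL : L < 0) (f : ℤ → (ℤ →₀ ℤ))
    (hfsupp : ∀ r : ℤ, r < d → f r = 0) (hfd : f d = Finsupp.single L 1)
    (Δ : ℤ →₀ ℤ) (P : ℕ → (ℤ →₀ ℚ)) (hmmr : HasMMRExpansion d f Δ P) :
    ∀ j : ℕ, 1 ≤ j →
      (∀ r : ℤ, r < -(2 * d * j) → P j r = 0) ∧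
      P j (-(2 * d * j)) = ((-1) ^ j * ((-L + j - 1).toNat.choose j) : ℚ) ∧
      P j (-(2 * d * j)) ≠ 0 :=
  mmr_deg_Pj_neg_L_general d L hL f hfd Δ P hmmr
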